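/- Let f₁, f₂ : ℝ² → ℝ² be C² vector fields and α₁, α₂ : ℝ² → ℝ be C¹ functions, and for each i consider the vector field ξᵢ on ℝ² × ℝ given by ξᵢ(x,u) = (fᵢ(x), αᵢ(x) + (u/2)·div fᵢ(x)). Then the Lie bracket [ξ₁,ξ₂] is again of this form: [ξ₁,ξ₂] = ξ_{f̂,α̂}, i.e. [ξ₁,ξ₂](x,u) = (f̂(x), α̂(x) + (u/2)·div f̂(x)), where f̂(x) = Df₂(x)(f₁(x)) − Df₁(x)(f₂(x)) and α̂(x) = Dα₂(x)(f₁(x)) − Dα₁(x)(f₂(x)) + ½(α₁(x)·div f₂(x) − α₂(x)·div f₁(x)). (This is the closure of the BMS Lie algebra 𝔟𝔪𝔰₄ of asymptotic Killing vectors, in a flat chart.) -/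

import Mathlib

/-- The divergence `div f = ∂₁f¹ + ∂₂f²` of a vector field on `ℝ²`. -/
noncomputable def divergence (f : (Fin 2 → ℝ) → (Fin 2 → ℝ)) (x : Fin 2 → ℝ) : ℝ :=
  ∑ i, fderiv ℝ f x (Pi.single i 1) i

/-- The flat-chart BMS generator on `ℝ² × ℝ` associated to a superrotation
vector field `f` and a supertranslation function `α`:
`ξ_{f,α}(x,u) = (f(x), α(x) + (u/2)·div f(x))`. -/
noncomputable def bmsGen (f : (Fin 2 → ℝ) → (Fin 2 → ℝ)) (α : (Fin 2 → ℝ) → ℝ) :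
    (Fin 2 → ℝ) × ℝ → (Fin 2 → ℝ) × ℝ :=
  fun p => (f p.1, α p.1 + p.2 / 2 * divergence f p.1)

/-!
The first component of `[ξ₁, ξ₂]` is `[f₁, f₂]`, and the `u`-independent part of the second
component is `α̂` by direct computation. The part linear in `u` matches because of the identity
`div [f₁, f₂] = D(div f₂)(f₁) − D(div f₁)(f₂)`: by symmetry of second derivatives,
`D[f₁, f₂] = D²f₂(f₁) − D²f₁(f₂) + Df₂ ∘ Df₁ − Df₁ ∘ Df₂`, and the trace kills the commutator.
-/

open VectorField

theorem LinearMap.sum_apply_single_eq_trace {R ι : Type*} [CommRing R] [Fintype ι]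
    [DecidableEq ι] (f : (ι → R) →ₗ[R] (ι → R)) :
    ∑ i, f (Pi.single i 1) i = LinearMap.trace R (ι → R) f := by
  rw [LinearMap.trace_eq_matrix_trace R (Pi.basisFun R ι), LinearMap.toMatrix_eq_toMatrix']
  simp [Matrix.trace, LinearMap.toMatrix'_apply]

theorem ContDiffAt.hasFDerivAt_fderiv_apply {E F : Type*} [NormedAddCommGroup E]
    [NormedSpace ℝ E] [NormedAddCommGroup F] [NormedSpace ℝ F] {f : E → F} {g : E → E} {x : E}
    (hf : ContDiffAt ℝ 2 f x) (hg : DifferentiableAt ℝ g x) :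
    HasFDerivAt (fun y => fderiv ℝ f y (g y))
      ((fderiv ℝ f x).comp (fderiv ℝ g x) + fderiv ℝ (fderiv ℝ f) x (g x)) x := by
  have hf' : DifferentiableAt ℝ (fderiv ℝ f) x :=
    (hf.fderiv_right (m := 1) (by norm_num)).differentiableAt one_ne_zero
  convert hf'.hasFDerivAt.clm_apply hg.hasFDerivAt using 2
  ext v
  exact (hf.isSymmSndFDerivAt (by simp) v (g x)).symm

section FiniteDimensional

variable {E : Type*} [NormedAddCommGroup E] [NormedSpace ℝ E] [FiniteDimensional ℝ E]

noncomputable def traceCLM : (E →L[ℝ] E) →L[ℝ] ℝ :=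
  LinearMap.toContinuousLinearMap (LinearMap.trace ℝ E ∘ₗ ContinuousLinearMap.coeLM ℝ)

@[simp]
theorem traceCLM_apply (L : E →L[ℝ] E) : traceCLM L = LinearMap.trace ℝ E L := rfl

variable {f g : E → E} {x : E}

theorem ContDiffAt.hasFDerivAt_trace_fderiv (hf : ContDiffAt ℝ 2 f x) :
    HasFDerivAt (fun y => LinearMap.trace ℝ E (fderiv ℝ f y))
      (traceCLM.comp (fderiv ℝ (fderiv ℝ f) x)) x :=
  (traceCLM.hasFDerivAt.comp x
    ((hf.fderiv_right (m := 1) (by norm_num)).differentiableAt one_ne_zero).hasFDerivAt :)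

theorem trace_fderiv_lieBracket (hf : ContDiffAt ℝ 2 f x) (hg : ContDiffAt ℝ 2 g x) :
    LinearMap.trace ℝ E (fderiv ℝ (lieBracket ℝ f g) x) =
      fderiv ℝ (fun y => LinearMap.trace ℝ E (fderiv ℝ g y)) x (f x)
        - fderiv ℝ (fun y => LinearMap.trace ℝ E (fderiv ℝ f y)) x (g x) := by
  have hfg : HasFDerivAt (lieBracket ℝ f g) _ x :=
    (hg.hasFDerivAt_fderiv_apply (hf.differentiableAt two_ne_zero)).sub
      (hf.hasFDerivAt_fderiv_apply (hg.differentiableAt two_ne_zero))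
  rw [hfg.fderiv, hf.hasFDerivAt_trace_fderiv.fderiv, hg.hasFDerivAt_trace_fderiv.fderiv]
  simp only [ContinuousLinearMap.toLinearMap_sub, ContinuousLinearMap.toLinearMap_add, map_sub,
    map_add, ContinuousLinearMap.toLinearMap_comp, ContinuousLinearMap.comp_apply, traceCLM_apply]
  rw [LinearMap.trace_comp_comm']
  ring

end FiniteDimensional

theorem divergence_eq_trace (f : (Fin 2 → ℝ) → (Fin 2 → ℝ)) :
    divergence f = fun x => LinearMap.trace ℝ (Fin 2 → ℝ) (fderiv ℝ f x) := by
  ext x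
  exact LinearMap.sum_apply_single_eq_trace _

theorem ContDiffAt.differentiableAt_divergence {f : (Fin 2 → ℝ) → (Fin 2 → ℝ)}
    {x : Fin 2 → ℝ} (hf : ContDiffAt ℝ 2 f x) : DifferentiableAt ℝ (divergence f) x := by
  rw [divergence_eq_trace]
  exact hf.hasFDerivAt_trace_fderiv.differentiableAt

theorem divergence_lieBracket {f g : (Fin 2 → ℝ) → (Fin 2 → ℝ)} {x : Fin 2 → ℝ}
    (hf : ContDiffAt ℝ 2 f x) (hg : ContDiffAt ℝ 2 g x) :
    divergence (lieBracket ℝ f g) x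
      = fderiv ℝ (divergence g) x (f x) - fderiv ℝ (divergence f) x (g x) := by
  simp only [divergence_eq_trace]
  exact trace_fderiv_lieBracket hf hg

theorem fderiv_bmsGen_apply {f : (Fin 2 → ℝ) → (Fin 2 → ℝ)} {α : (Fin 2 → ℝ) → ℝ}
    {p : (Fin 2 → ℝ) × ℝ} (hf : DifferentiableAt ℝ f p.1) (hα : DifferentiableAt ℝ α p.1)
    (hdiv : DifferentiableAt ℝ (divergence f) p.1) (v : (Fin 2 → ℝ) × ℝ) :
    fderiv ℝ (bmsGen f α) p v =
      (fderiv ℝ f p.1 v.1,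
        fderiv ℝ α p.1 v.1 + v.2 / 2 * divergence f p.1
          + p.2 / 2 * fderiv ℝ (divergence f) p.1 v.1) := by
  have hfst := hasFDerivAt_fst (𝕜 := ℝ) (E := Fin 2 → ℝ) (F := ℝ) (p := p)
  have hhalf : HasFDerivAt (fun q : (Fin 2 → ℝ) × ℝ => q.2 / 2)
      ((2⁻¹ : ℝ) • ContinuousLinearMap.snd ℝ (Fin 2 → ℝ) ℝ) p := by
    simpa [div_eq_mul_inv] using (hasFDerivAt_snd (p := p)).mul_const (2⁻¹ : ℝ)
  have h : HasFDerivAt (bmsGen f α) _ p :=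
    (hf.hasFDerivAt.comp p hfst).prodMk
      ((hα.hasFDerivAt.comp p hfst).add (hhalf.mul (hdiv.hasFDerivAt.comp p hfst)))
  rw [h.fderiv]
  simp only [ContinuousLinearMap.prod_apply, ContinuousLinearMap.comp_apply,
    ContinuousLinearMap.coe_fst', add_apply, smul_apply,
    smul_eq_mul, ContinuousLinearMap.coe_snd', Prod.mk.injEq, true_and]
  ring

/-- Closure of the BMS Lie algebra `𝔟𝔪𝔰₄` in a flat chart: the Lie bracket
`[ξ₁,ξ₂](p) = Dξ₂(p)(ξ₁(p)) − Dξ₁(p)(ξ₂(p))` of two BMS generators is again a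
BMS generator `ξ_{f̂,α̂}`, with `f̂ = Df₂(f₁) − Df₁(f₂)` and
`α̂ = Dα₂(f₁) − Dα₁(f₂) + ½(α₁·div f₂ − α₂·div f₁)`. -/
theorem bms_lie_algebra_closes
    (f₁ f₂ : (Fin 2 → ℝ) → (Fin 2 → ℝ)) (α₁ α₂ : (Fin 2 → ℝ) → ℝ)
    (hf₁ : ContDiff ℝ 2 f₁) (hf₂ : ContDiff ℝ 2 f₂)
    (hα₁ : ContDiff ℝ 1 α₁) (hα₂ : ContDiff ℝ 1 α₂) :
    ∀ p : (Fin 2 → ℝ) × ℝ,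
      fderiv ℝ (bmsGen f₂ α₂) p (bmsGen f₁ α₁ p)
        - fderiv ℝ (bmsGen f₁ α₁) p (bmsGen f₂ α₂ p) =
      bmsGen (fun x => fderiv ℝ f₂ x (f₁ x) - fderiv ℝ f₁ x (f₂ x))
        (fun x => fderiv ℝ α₂ x (f₁ x) - fderiv ℝ α₁ x (f₂ x)
          + (α₁ x * divergence f₂ x - α₂ x * divergence f₁ x) / 2) p := by
  intro p
  rw [fderiv_bmsGen_apply (hf₂.differentiable two_ne_zero _) (hα₂.differentiable one_ne_zero _)
      hf₂.contDiffAt.differentiableAt_divergence,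
    fderiv_bmsGen_apply (hf₁.differentiable two_ne_zero _) (hα₁.differentiable one_ne_zero _)
      hf₁.contDiffAt.differentiableAt_divergence]
  change _ = bmsGen (lieBracket ℝ f₁ f₂) _ p
  simp only [bmsGen, divergence_lieBracket hf₁.contDiffAt hf₂.contDiffAt, Prod.mk_sub_mk,
    lieBracket]
  congr 1
  ring
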